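/- Let m ≥ 1, let x : Fin m → EuclideanSpace ℝ (Fin 3) be a point configuration, let R be a 3×3 real matrix with R * Rᵀ = 1, and let v ∈ ℝ³. If (Q, s) ∈ F(x), then (R * Q, R.mulVec s + v) ∈ F(fun i => R.mulVec (x i) + v); that is, transforming each column of Q by R and the translation part by the Euclidean motion produces a frame element of the transformed configuration. -/

import Mathlib

open Matrix

/-- Reinterpret a plain vector `Fin 3 → ℝ` as a point of `EuclideanSpace ℝ (Fin 3)`
(the identity map on the underlying data). -/
def toE (v : Fin 3 → ℝ) : EuclideanSpace ℝ (Fin 3) := WithLp.toLp 2 v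

/-- The centroid of a point configuration. -/
noncomputable def centroid {m : ℕ} (x : Fin m → EuclideanSpace ℝ (Fin 3)) :
    EuclideanSpace ℝ (Fin 3) :=
  (m : ℝ)⁻¹ • ∑ i, x i

/-- The outer product `p pᵀ` of a vector with itself. -/
def outerSq (p : EuclideanSpace ℝ (Fin 3)) : Matrix (Fin 3) (Fin 3) ℝ :=
  Matrix.of fun a b => p a * p b

/-- The covariance matrix of a point configuration. -/
noncomputable def cov {m : ℕ} (x : Fin m → EuclideanSpace ℝ (Fin 3)) :
    Matrix (Fin 3) (Fin 3) ℝ :=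
  (m : ℝ)⁻¹ • ∑ i, outerSq (x i - centroid x)

/-- `lam` lists the eigenvalues of the symmetric matrix `C` in ascending order:
it is monotone and `C` is orthogonally diagonalized with diagonal `lam`. -/
def IsSortedEigs (C : Matrix (Fin 3) (Fin 3) ℝ) (lam : Fin 3 → ℝ) : Prop :=
  Monotone lam ∧ ∃ P : Matrix (Fin 3) (Fin 3) ℝ,
    P * Pᵀ = 1 ∧ C = P * Matrix.diagonal lam * Pᵀ

/-- The frame set of a point configuration: pairs `(Q, centroid x)` where the `j`-th column
of `Q` is a unit eigenvector of `cov x` for the `j`-th eigenvalue in ascending order. -/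
noncomputable def frameSet {m : ℕ} (x : Fin m → EuclideanSpace ℝ (Fin 3)) :
    Set (Matrix (Fin 3) (Fin 3) ℝ × EuclideanSpace ℝ (Fin 3)) :=
  { Qs | Qs.2 = centroid x ∧ ∃ lam : Fin 3 → ℝ, IsSortedEigs (cov x) lam ∧
      ∀ j : Fin 3, ‖toE (Qs.1ᵀ j)‖ = 1 ∧
        (cov x).mulVec (Qs.1ᵀ j) = lam j • Qs.1ᵀ j }

/-
The covariance is built from the differences `x i - centroid x`, which a Euclidean motion
`y ↦ R y + v` maps to `R (x i - centroid x)`; hence `cov` transforms to `R * cov x * Rᵀ`. Conjugating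
by an orthogonal `R` keeps the ordered spectrum and carries each unit eigenvector `q` of `cov x` to
the unit eigenvector `R q` of `R * cov x * Rᵀ` for the same eigenvalue.
-/

open WithLp (toLp)

theorem transpose_mul_apply_eq_mulVec {α n : Type*} [CommSemiring α] [Fintype n]
    (R Q : Matrix n n α) (j : n) : (R * Q)ᵀ j = R *ᵥ Qᵀ j := by
  rw [transpose_mul, mul_apply_eq_vecMul, vecMul_transpose]

theorem mulVec_conj_eq_smul_of_mulVec_eq_smul {α n : Type*} [CommRing α] [Fintype n]
    [DecidableEq n] {R C : Matrix n n α} (hR : Rᵀ * R = 1) {q : n → α} {μ : α}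
    (hq : C *ᵥ q = μ • q) : (R * C * Rᵀ) *ᵥ (R *ᵥ q) = μ • (R *ᵥ q) := by
  rw [mulVec_mulVec, mul_assoc, hR, mul_one, ← mulVec_mulVec, hq, mulVec_smul]

theorem norm_toLp_mulVec_of_transpose_mul_self {n : Type*} [Fintype n] [DecidableEq n]
    {R : Matrix n n ℝ} (hR : Rᵀ * R = 1) (q : n → ℝ) :
    ‖(toLp 2 (R *ᵥ q) : EuclideanSpace ℝ n)‖ = ‖(toLp 2 q : EuclideanSpace ℝ n)‖ := by
  simp only [norm_eq_sqrt_real_inner, EuclideanSpace.inner_toLp_toLp, star_trivial,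
    dotProduct_mulVec, ← mulVec_transpose, mulVec_mulVec, hR, one_mulVec]

theorem IsSortedEigs.conj {C : Matrix (Fin 3) (Fin 3) ℝ} {lam : Fin 3 → ℝ}
    (h : IsSortedEigs C lam) {R : Matrix (Fin 3) (Fin 3) ℝ} (hR : R * Rᵀ = 1) :
    IsSortedEigs (R * C * Rᵀ) lam := by
  obtain ⟨hmono, P, hP, rfl⟩ := h
  refine ⟨hmono, R * P, ?_, ?_⟩
  · rw [transpose_mul, ← mul_assoc, mul_assoc R P, hP, mul_one, hR]
  · simp only [transpose_mul, mul_assoc]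

theorem centroid_map_add {m : ℕ} (hm : m ≠ 0)
    (f : EuclideanSpace ℝ (Fin 3) →ₗ[ℝ] EuclideanSpace ℝ (Fin 3))
    (x : Fin m → EuclideanSpace ℝ (Fin 3)) (v : EuclideanSpace ℝ (Fin 3)) :
    centroid (fun i => f (x i) + v) = f (centroid x) + v := by
  have hm' : (m : ℝ) ≠ 0 := Nat.cast_ne_zero.mpr hm
  simp only [centroid, Finset.sum_add_distrib, map_smul, map_sum, Finset.sum_const,
    Finset.card_univ, Fintype.card_fin, smul_add, ← Nat.cast_smul_eq_nsmul ℝ, smul_smul,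
    inv_mul_cancel₀ hm', one_smul]

theorem outerSq_toLpLin (R : Matrix (Fin 3) (Fin 3) ℝ) (p : EuclideanSpace ℝ (Fin 3)) :
    outerSq (toLpLin 2 2 R p) = R * outerSq p * Rᵀ := by
  ext a b
  simp only [outerSq, toLpLin_apply, PiLp.toLp_apply, of_apply, mul_apply, mulVec, dotProduct,
    transpose_apply, Fin.sum_univ_succ, Fin.sum_univ_zero]
  ring

theorem cov_mulVec_add {m : ℕ} (x : Fin m → EuclideanSpace ℝ (Fin 3))
    (R : Matrix (Fin 3) (Fin 3) ℝ) (v : EuclideanSpace ℝ (Fin 3)) :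
    cov (fun i => toE (R *ᵥ x i) + v) = R * cov x * Rᵀ := by
  rcases eq_or_ne m 0 with rfl | hm
  · simp [cov]
  have hdiff : ∀ i, toE (R *ᵥ x i) + v - centroid (fun i => toE (R *ᵥ x i) + v)
      = toLpLin 2 2 R (x i - centroid x) := fun i => by
    -- `toE (R *ᵥ y)` is `toLpLin 2 2 R y` unfolded
    change toLpLin 2 2 R (x i) + v - centroid (fun i => toLpLin 2 2 R (x i) + v) = _
    rw [centroid_map_add hm, add_sub_add_right_eq_sub, map_sub]
  simp only [cov, hdiff, outerSq_toLpLin, ← Finset.sum_mul, ← Matrix.mul_sum, Matrix.mul_smul,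
    Matrix.smul_mul]

/-- **Euclidean motions map frame elements to frame elements.** If `R * Rᵀ = 1`,
`v ∈ ℝ³`, and `(Q, s)` belongs to the frame set of `x`, then `(R * Q, R s + v)` belongs
to the frame set of the transformed configuration `i ↦ R (x i) + v`. -/
theorem frameSet_map_mem {m : ℕ} (hm : 1 ≤ m) (x : Fin m → EuclideanSpace ℝ (Fin 3))
    (R : Matrix (Fin 3) (Fin 3) ℝ) (hR : R * Rᵀ = 1) (v : EuclideanSpace ℝ (Fin 3))
    (Q : Matrix (Fin 3) (Fin 3) ℝ) (s : EuclideanSpace ℝ (Fin 3))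
    (hQs : (Q, s) ∈ frameSet x) :
    (R * Q, toE (R.mulVec s) + v) ∈ frameSet (fun i => toE (R.mulVec (x i)) + v) := by
  obtain ⟨rfl, lam, hlam, hcols⟩ := hQs
  have hRtR : Rᵀ * R = 1 := mul_eq_one_comm.mp hR
  refine ⟨(centroid_map_add (Nat.one_le_iff_ne_zero.mp hm) (toLpLin 2 2 R) x v).symm, lam,
    cov_mulVec_add x R v ▸ hlam.conj hR, fun j => ?_⟩
  rw [transpose_mul_apply_eq_mulVec, cov_mulVec_add]
  exact ⟨(norm_toLp_mulVec_of_transpose_mul_self hRtR _).trans (hcols j).1,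
    mulVec_conj_eq_smul_of_mulVec_eq_smul hRtR (hcols j).2⟩
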